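/- For eventually periodic strings: if α = x u^ω and β = y v^ω with finite nonempty words x, y, u, v such that the set of letters occurring in x is contained in the set of letters occurring in y, and the set of letters occurring in u is contained in the set of letters occurring in v, then there is a quasi-isometry from α to β. -/

import Mathlib

def IsQI {Γ : Type*} (α β : ℕ → Γ) (f : ℕ → ℕ) (A B : ℝ) : Prop :=
  1 ≤ A ∧ 0 ≤ B ∧ (∀ n, α n = β (f n)) ∧
  (∀ x y : ℕ, (1 / A) * |(x : ℝ) - (y : ℝ)| - B ≤ |(f x : ℝ) - (f y : ℝ)| ∧
      |(f x : ℝ) - (f y : ℝ)| ≤ A * |(x : ℝ) - (y : ℝ)| + B) ∧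
  (∀ m : ℕ, ∃ x : ℕ, |(m : ℝ) - (f x : ℝ)| ≤ A)

/-- `α ≤_QI β`: there is a quasi-isometry from `α` to `β`. -/
def QI {Γ : Type*} (α β : ℕ → Γ) : Prop := ∃ f A B, IsQI α β f A B

/-- The eventually periodic string `x u^ω` (prefix `x` followed by infinitely many
copies of `u`). -/
def epString {Γ : Type*} [Inhabited Γ] (x u : List Γ) : ℕ → Γ := fun i =>
  if i < x.length then x.getD i default else u.getD ((i - x.length) % u.length) default

/-!
Map the prefix `x` letter by letter into `y`, and the `q`-th copy of `u` into the `q`-th copy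
of `v`, sending each letter to one of its occurrences. This map stays within bounded distance of
the affine map `n ↦ (|v| / |u|) (n - |x|) + |y|`, and any map `ℕ → ℕ` within bounded distance of
an affine map of positive slope is a quasi-isometry.
-/

theorem abs_abs_sub_sub_abs_sub_le {ι : Type*} {g L : ι → ℝ} {D : ℝ}
    (h : ∀ i, |g i - L i| ≤ D) (i j : ι) : |(|g i - g j| - |L i - L j|)| ≤ 2 * D :=
  calc |(|g i - g j| - |L i - L j|)| ≤ |(g i - g j) - (L i - L j)| :=
        abs_abs_sub_abs_le_abs_sub _ _
    _ = |(g i - L i) - (g j - L j)| := by congr 1; ring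
    _ ≤ |g i - L i| + |g j - L j| := abs_sub _ _
    _ ≤ 2 * D := by linarith [h i, h j]

theorem isQI_of_abs_sub_affine_le {Γ : Type*} {α β : ℕ → Γ} {f : ℕ → ℕ} {s c D : ℝ}
    (hs : 0 < s) (hαβ : ∀ n, α n = β (f n)) (hf : ∀ n, |(f n : ℝ) - (s * n + c)| ≤ D) :
    IsQI α β f (1 + s + 1 / s + |c| + D) (2 * D) := by
  set A := 1 + s + 1 / s + |c| + D
  have hD : 0 ≤ D := (abs_nonneg _).trans (hf 0)
  have hs' : 0 < 1 / s := by positivity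
  have hc := abs_nonneg c
  refine ⟨by linarith, by positivity, hαβ, fun x y => ?_, fun m => ?_⟩
  · have hA : 0 < A := by linarith
    have hdist := abs_le.mp (abs_abs_sub_sub_abs_sub_le hf x y)
    have hL : |(s * x + c) - (s * y + c)| = s * |(x : ℝ) - y| := by
      rw [show (s * x + c) - (s * y + c) = s * ((x : ℝ) - y) by ring, abs_mul, abs_of_pos hs]
    rw [hL] at hdist
    have h1A : 1 / A ≤ s := (one_div_le hA hs).mpr (by linarith)
    constructor
    · nlinarith [abs_nonneg ((x : ℝ) - y)]
    · nlinarith [abs_nonneg ((x : ℝ) - y)]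
  · set n := ⌊(m - c) / s⌋₊
    have hlt : (m : ℝ) - c < s * n + s := by
      have := Nat.lt_floor_add_one ((m - c) / s)
      rw [div_lt_iff₀ hs] at this
      linarith
    have hge : -|c| ≤ (m : ℝ) - (s * n + c) := by
      rcases le_or_gt 0 ((m - c) / s) with hmc | hmc
      · have := Nat.floor_le hmc
        rw [le_div_iff₀ hs] at this
        linarith [neg_abs_le c]
      · rw [show n = 0 from Nat.floor_eq_zero.mpr (hmc.trans zero_lt_one), Nat.cast_zero,
          mul_zero, zero_add]
        linarith [le_abs_self c, m.cast_nonneg (α := ℝ)]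
    refine ⟨n, ?_⟩
    calc |(m : ℝ) - f n| ≤ |(m : ℝ) - (s * n + c)| + |(s * n + c) - f n| := abs_sub_le _ _ _
      _ ≤ A := by
        have hm : |(m : ℝ) - (s * n + c)| ≤ s + |c| := abs_le.mpr ⟨by linarith, by linarith⟩
        rw [abs_sub_comm _ (f n : ℝ)]
        linarith [hf n]

theorem List.getD_mem {α : Type*} {l : List α} {n : ℕ} (d : α) (h : n < l.length) :
    l.getD n d ∈ l := by
  rw [getD_eq_getElem _ _ h]
  exact getElem_mem h

theorem List.getD_idxOf {α : Type*} [BEq α] [LawfulBEq α] {l : List α} {a : α} (d : α)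
    (h : a ∈ l) : l.getD (l.idxOf a) d = a := by
  rw [getD_eq_getElem _ _ (idxOf_lt_length_of_mem h), getElem_idxOf]

section EpMap

variable {Γ : Type*} [Inhabited Γ] {x y u v : List Γ}

open Classical in
noncomputable def epMap (x y u v : List Γ) (n : ℕ) : ℕ :=
  if n < x.length then y.idxOf (x.getD n default)
  else y.length + v.length * ((n - x.length) / u.length) +
    v.idxOf (u.getD ((n - x.length) % u.length) default)

theorem epMap_of_lt (hxy : ∀ a ∈ x, a ∈ y) {n : ℕ} (hn : n < x.length) :
    epMap x y u v n < y.length ∧ y.getD (epMap x y u v n) default = x.getD n default := by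
  classical
  have hmem : x.getD n default ∈ y := hxy _ (List.getD_mem _ hn)
  rw [epMap, if_pos hn]
  exact ⟨List.idxOf_lt_length_of_mem hmem, List.getD_idxOf _ hmem⟩

theorem epMap_of_le (hu : u ≠ []) (huv : ∀ a ∈ u, a ∈ v) {n : ℕ} (hn : x.length ≤ n) :
    ∃ j < v.length, epMap x y u v n = y.length + v.length * ((n - x.length) / u.length) + j ∧
      v.getD j default = u.getD ((n - x.length) % u.length) default := by
  classical
  have hmem : u.getD ((n - x.length) % u.length) default ∈ v :=
    huv _ (List.getD_mem _ (Nat.mod_lt _ (List.length_pos_iff.mpr hu)))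
  rw [epMap, if_neg hn.not_gt]
  exact ⟨_, List.idxOf_lt_length_of_mem hmem, rfl, List.getD_idxOf _ hmem⟩

theorem epString_epMap (hu : u ≠ []) (hxy : ∀ a ∈ x, a ∈ y) (huv : ∀ a ∈ u, a ∈ v) (n : ℕ) :
    epString x u n = epString y v (epMap x y u v n) := by
  rcases lt_or_ge n x.length with hn | hn
  · obtain ⟨hlt, hget⟩ := epMap_of_lt (u := u) (v := v) hxy hn
    simp only [epString, if_pos hn, if_pos hlt, hget]
  · obtain ⟨j, hj, hmap, hget⟩ := epMap_of_le (y := y) hu huv hn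
    have hnot : ¬ epMap x y u v n < y.length := by omega
    rw [epString, epString, if_neg hn.not_gt, if_neg hnot, hmap, add_assoc,
      Nat.add_sub_cancel_left, Nat.mul_add_mod, Nat.mod_eq_of_lt hj, hget]

theorem abs_epMap_sub_affine_le (hu : u ≠ []) (hxy : ∀ a ∈ x, a ∈ y) (huv : ∀ a ∈ u, a ∈ v)
    (n : ℕ) :
    |(epMap x y u v n : ℝ) - ((v.length / u.length : ℝ) * n +
        (y.length - (v.length / u.length : ℝ) * x.length))| ≤
      y.length + (v.length / u.length : ℝ) * x.length + v.length := by
  set s : ℝ := v.length / u.length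
  have hUn : 0 < u.length := List.length_pos_iff.mpr hu
  have hU : (0 : ℝ) < u.length := Nat.cast_pos.mpr hUn
  have hs : 0 ≤ s := by positivity
  rw [abs_le]
  rcases lt_or_ge n x.length with hn | hn
  · have hsn : 0 ≤ s * n := mul_nonneg hs n.cast_nonneg
    have hf := (epMap_of_lt (u := u) (v := v) hxy hn).1
    have hsX : s * n ≤ s * x.length := mul_le_mul_of_nonneg_left (by exact_mod_cast hn.le) hs
    have hf' : (epMap x y u v n : ℝ) < y.length := by exact_mod_cast hf
    constructor <;> linarith [(epMap x y u v n).cast_nonneg (α := ℝ)]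
  · obtain ⟨j, hj, hmap, -⟩ := epMap_of_le (y := y) hu huv hn
    set q := (n - x.length) / u.length
    set r := (n - x.length) % u.length
    have hnqr : (n : ℝ) = x.length + u.length * q + r := by
      have := congrArg (Nat.cast (R := ℝ)) (Nat.div_add_mod (n - x.length) u.length)
      push_cast [Nat.cast_sub hn] at this
      linarith
    have hsU : s * u.length = v.length := div_mul_cancel₀ _ hU.ne'
    have hsr : s * r ≤ v.length := by
      rw [← hsU]
      exact mul_le_mul_of_nonneg_left (by exact_mod_cast (Nat.mod_lt _ hUn).le) hs
    have hf : (epMap x y u v n : ℝ) = y.length + v.length * q + j := by rw [hmap]; push_cast; ring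
    have hj' : (j : ℝ) < v.length := by exact_mod_cast hj
    have hsn' : s * n = s * x.length + v.length * q + s * r := by
      rw [hnqr, ← hsU]; ring
    have hsX : 0 ≤ s * x.length := mul_nonneg hs (Nat.cast_nonneg _)
    have hsr0 : 0 ≤ s * r := mul_nonneg hs (Nat.cast_nonneg _)
    constructor <;> linarith [j.cast_nonneg (α := ℝ), y.length.cast_nonneg (α := ℝ)]

end EpMap

theorem eventually_periodic_QI {Γ : Type*} [Inhabited Γ] (x y u v : List Γ)
    (hu : u ≠ [])
    (hxy : ∀ a ∈ x, a ∈ y) (huv : ∀ a ∈ u, a ∈ v) :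
    QI (epString x u) (epString y v) := by
  have hv : v ≠ [] := List.ne_nil_of_mem (huv _ (List.head_mem hu))
  have hs : (0 : ℝ) < v.length / u.length := div_pos
    (Nat.cast_pos.mpr (List.length_pos_iff.mpr hv)) (Nat.cast_pos.mpr (List.length_pos_iff.mpr hu))
  exact ⟨_, _, _, isQI_of_abs_sub_affine_le hs (epString_epMap hu hxy huv)
    (abs_epMap_sub_affine_le hu hxy huv)⟩
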